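/- arXiv:1812.04221 — 7 statements merged into one kernel-verified Lean document; each statement's English description precedes it below -/
import Mathlib

section
/- Let k be a real number and for x > 2 set y(x) = (x² − 4)^{−1/2}. Then the function f_k(x) = y(x)^k = (x² − 4)^{−k/2} satisfies, for every x > 2, ((x² − 4)²/x)·f_k‴(x) + 8(x² − 4)·f_k″(x) + ((14x² − 24)/x)·f_k′(x) + 4·f_k(x) = (1 − k)(k − 2)²·y(x)^k − 4k²(k − 2)·y(x)^{k+2}. Equivalently, the differential operator E = (1/(x·y⁴))·d³/dx³ + (8/y²)·d²/dx² + ((14x² − 24)/x)·d/dx + 4 satisfies E(yᵏ) = (1 − k)(k − 2)²·yᵏ − 4k²(k − 2)·y^{k+2}. -/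
/-!
Write `u = x² - c`. Each derivative of `u ^ p` is a combination of `u ^ (p - j)` and
`x · u ^ (p - j)`, because `(u ^ q)' = 2 q x u ^ (q - 1)` and `x² = u + c` absorbs the factor `x²`
that appears in the second derivative. For `c = 4`, writing every `u ^ (p - j)` as `u ^ p / u ^ j`
turns the claim into an identity of rational functions of `x`.
-/

open Set

section SqSubRpow

variable {c : ℝ}

theorem isOpen_setOf_sq_sub_ne_zero : IsOpen {x : ℝ | x ^ 2 - c ≠ 0} :=
  isOpen_ne_fun (by fun_prop) continuous_const

theorem hasDerivAt_sq_sub_rpow (q : ℝ) {x : ℝ} (hx : x ^ 2 - c ≠ 0) :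
    HasDerivAt (fun x => (x ^ 2 - c) ^ q) (2 * q * x * (x ^ 2 - c) ^ (q - 1)) x := by
  have h : HasDerivAt (fun x : ℝ => x ^ 2 - c) (2 * x) x := by
    simpa using (hasDerivAt_pow 2 x).sub_const c
  convert h.rpow_const (p := q) (Or.inl hx) using 1
  ring

theorem eqOn_deriv_sq_sub_rpow (q : ℝ) :
    EqOn (deriv fun x => (x ^ 2 - c) ^ q) (fun x => 2 * q * x * (x ^ 2 - c) ^ (q - 1))
      {x | x ^ 2 - c ≠ 0} :=
  fun _ hx => (hasDerivAt_sq_sub_rpow q hx).deriv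

theorem eqOn_iteratedDeriv_two_sq_sub_rpow (p : ℝ) :
    EqOn (iteratedDeriv 2 fun x => (x ^ 2 - c) ^ p)
      (fun x => 2 * p * (2 * p - 1) * (x ^ 2 - c) ^ (p - 1)
        + 4 * p * (p - 1) * c * (x ^ 2 - c) ^ (p - 2))
      {x | x ^ 2 - c ≠ 0} := by
  intro x hx
  rw [iteratedDeriv_succ, iteratedDeriv_one,
    (eqOn_deriv_sq_sub_rpow p).deriv isOpen_setOf_sq_sub_ne_zero hx]
  have h := ((hasDerivAt_id' x).const_mul (2 * p)).fun_mul (hasDerivAt_sq_sub_rpow (p - 1) hx)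
  dsimp only
  rw [h.deriv, show p - 1 - 1 = p - 2 by ring, show p - 1 = p - 2 + 1 by ring,
    Real.rpow_add_one hx]
  ring

theorem eqOn_iteratedDeriv_three_sq_sub_rpow (p : ℝ) :
    EqOn (iteratedDeriv 3 fun x => (x ^ 2 - c) ^ p)
      (fun x => 4 * p * (p - 1) * (2 * p - 1) * x * (x ^ 2 - c) ^ (p - 2)
        + 8 * p * (p - 1) * (p - 2) * c * x * (x ^ 2 - c) ^ (p - 3))
      {x | x ^ 2 - c ≠ 0} := by
  intro x hx
  rw [iteratedDeriv_succ,
    (eqOn_iteratedDeriv_two_sq_sub_rpow p).deriv isOpen_setOf_sq_sub_ne_zero hx]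
  have h := ((hasDerivAt_sq_sub_rpow (p - 1) hx).const_mul (2 * p * (2 * p - 1))).fun_add
    ((hasDerivAt_sq_sub_rpow (p - 2) hx).const_mul (4 * p * (p - 1) * c))
  rw [h.deriv, show p - 1 - 1 = p - 2 by ring, show p - 2 - 1 = p - 3 by ring]
  ring

end SqSubRpow

/-- For real `k` and `x > 2`, the function
`f_k(x) = (x² − 4)^(−k/2) = y(x)^k` (where `y(x) = (x² − 4)^(−1/2)`) satisfies
`E(yᵏ) = (1 − k)(k − 2)²·yᵏ − 4k²(k − 2)·y^{k+2}` for the operator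
`E = (1/(x·y⁴))·d³/dx³ + (8/y²)·d²/dx² + ((14x² − 24)/x)·d/dx + 4` on `(2, ∞)`. -/
theorem theta_Eop_action (k : ℝ) (f : ℝ → ℝ)
    (hf : ∀ x : ℝ, f x = (x ^ 2 - 4) ^ (-(k / 2)) ) :
    ∀ x : ℝ, 2 < x →
      ((x ^ 2 - 4) ^ 2 / x) * iteratedDeriv 3 f x
        + 8 * (x ^ 2 - 4) * iteratedDeriv 2 f x
        + ((14 * x ^ 2 - 24) / x) * deriv f x
        + 4 * f x
      = (1 - k) * (k - 2) ^ 2 * (x ^ 2 - 4) ^ (-(k / 2))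
        - 4 * k ^ 2 * (k - 2) * (x ^ 2 - 4) ^ (-((k + 2) / 2)) := by
  intro x hx
  obtain rfl : f = fun x => (x ^ 2 - 4) ^ (-(k / 2)) := funext hf
  have hu : 0 < x ^ 2 - 4 := by nlinarith
  rw [eqOn_iteratedDeriv_three_sq_sub_rpow _ hu.ne', eqOn_iteratedDeriv_two_sq_sub_rpow _ hu.ne',
    eqOn_deriv_sq_sub_rpow _ hu.ne', show -((k + 2) / 2) = -(k / 2) - 1 by ring]
  simp only [Real.rpow_sub hu, Real.rpow_one, Real.rpow_ofNat]
  field_simp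
  ring
end

section
/- For every integer n ≥ 1, the following identity of rational numbers holds: 2·∑_{g=2}^{n} C(2n−1, 2g−3) · (1 − 2^{−2g})·B_{2g}/(g(g−1)) = (4^{−n} − 4^{−1})/n, where C(·,·) denotes the binomial coefficient. (For n = 1 the left-hand sum is empty and both sides are 0.) This identity expresses that the sequence F_g = (1 − 2^{−2g})·B_{2g}/(g(g−1)) solves the degree-one constraint imposed by the Toda equation on the zero-point Θ-Gromov–Witten free energies of P¹. -/
open Finset

/-!
Put `N = 2n + 2` and `k = 2g`. Three applications of `(m + 1) C(m, a) = C(m + 1, a + 1) (a + 1)`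
give `C(2n - 1, 2g - 3) / (g (g - 1)) = 2 C(N, 2g) (2g - 1) / (n (N - 1) N)`, so the claim is about
`∑ₖ C(N, k) (k - 1) (1 - 2⁻ᵏ) Bₖ`, whose odd-index terms vanish.
Writing `k - 1 = (N - 1) - (N - k)` and `C(N, k) (N - k) = N C(N - 1, k)` shows
`∑ₖ C(N, k) (k - 1) Bₖ x ^ (N - k) = (N - 1) B_N(x) - N x B_{N-1}(x)`.
Its value at `x = 1` minus `2⁻ᴺ` times its value at `x = 2` is the weighted sum; since
`B_{N-1}(1) = 0` and `Bₘ(2) = Bₘ(1) + m`, this equals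
`(N - 1)(1 - 2⁻ᴺ) B_N + N (N - 1) / 2ᴺ`, and the first summand is exactly the `k = N` term.
-/

theorem Finset.sum_range_two_mul_of_odd_eq_zero {M : Type*} [AddCommMonoid M] (f : ℕ → M)
    (hf : ∀ i, f (2 * i + 1) = 0) (m : ℕ) :
    ∑ k ∈ range (2 * m), f k = ∑ i ∈ range m, f (2 * i) := by
  induction m with
  | zero => simp
  | succ m ih => rw [Nat.mul_succ, sum_range_succ, sum_range_succ, hf, add_zero, ih, sum_range_succ]

theorem Finset.sum_range_add_one_eq_add_add_sum_Icc_two {M : Type*} [AddCommMonoid M]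
    (f : ℕ → M) {n : ℕ} (hn : 1 ≤ n) :
    ∑ k ∈ range (n + 1), f k = f 0 + f 1 + ∑ k ∈ Icc 2 n, f k := by
  rw [range_eq_Ico, ← sum_Ico_consecutive f (Nat.zero_le 2) (by omega : 2 ≤ n + 1),
    Ico_add_one_right_eq_Icc]
  simp [sum_range_succ]

theorem sub_one_mul_bernoulli_of_odd {k : ℕ} (hk : Odd k) :
    ((k : ℚ) - 1) * bernoulli k = 0 := by
  obtain rfl | hk1 := Nat.eq_or_lt_of_le hk.pos
  · norm_num
  · rw [bernoulli_eq_zero_of_odd hk hk1, mul_zero]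

namespace Polynomial

theorem bernoulli_eval_eq_sum (M : ℕ) (x : ℚ) :
    (bernoulli M).eval x
      = ∑ k ∈ range (M + 1), (M.choose k : ℚ) * _root_.bernoulli k * x ^ (M - k) := by
  simp only [bernoulli, eval_finsetSum, eval_monomial, mul_comm (_root_.bernoulli _)]

theorem bernoulli_eval_two (n : ℕ) : (bernoulli n).eval 2 = bernoulli' n + n := by
  simpa [one_add_one_eq_two] using bernoulli_eval_one_add n 1

theorem sum_choose_mul_sub_mul_bernoulli_mul_pow (M : ℕ) (x : ℚ) :
    ∑ k ∈ range (M + 2),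
        ((M + 1).choose k : ℚ) * ((M + 1 : ℚ) - k) * _root_.bernoulli k * x ^ (M + 1 - k)
      = (M + 1) * x * (bernoulli M).eval x := by
  rw [sum_range_succ, bernoulli_eval_eq_sum, mul_sum]
  push_cast
  rw [sub_self, mul_zero, zero_mul, zero_mul, add_zero]
  refine sum_congr rfl fun k hk => ?_
  have hkM : k ≤ M := mem_range_succ_iff.mp hk
  have hchoose : ((M + 1).choose k : ℚ) * ((M + 1 : ℚ) - k) = (M + 1) * M.choose k := by
    have h := congrArg (Nat.cast : ℕ → ℚ) (Nat.choose_mul_succ_eq M k)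
    push_cast [Nat.cast_sub (by omega : k ≤ M + 1)] at h
    linear_combination -h
  rw [Nat.sub_add_comm hkM, pow_succ]
  linear_combination (_root_.bernoulli k * x * x ^ (M - k)) * hchoose

theorem sum_choose_mul_sub_one_mul_bernoulli_mul_pow (M : ℕ) (x : ℚ) :
    ∑ k ∈ range (M + 2),
        ((M + 1).choose k : ℚ) * ((k : ℚ) - 1) * _root_.bernoulli k * x ^ (M + 1 - k)
      = M * (bernoulli (M + 1)).eval x - (M + 1) * x * (bernoulli M).eval x := by
  rw [← sum_choose_mul_sub_mul_bernoulli_mul_pow, bernoulli_eval_eq_sum, mul_sum,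
    ← sum_sub_distrib]
  refine sum_congr rfl fun k _ => ?_
  ring

end Polynomial

theorem sum_choose_mul_sub_one_mul_one_sub_inv_two_pow_mul_bernoulli (n : ℕ) (hn : 1 ≤ n) :
    ∑ k ∈ range (2 * n + 3),
        ((2 * n + 2).choose k : ℚ) * ((k : ℚ) - 1) * (1 - ((2 : ℚ) ^ k)⁻¹) * bernoulli k
      = (2 * n + 1) * (1 - ((2 : ℚ) ^ (2 * n + 2))⁻¹) * bernoulli (2 * n + 2)
        + (2 * n + 2) * (2 * n + 1) / 2 ^ (2 * n + 2) := by
  have hsplit := fun x => Polynomial.sum_choose_mul_sub_one_mul_bernoulli_mul_pow (2 * n + 1) x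
  have hodd : bernoulli' (2 * n + 1) = 0 :=
    bernoulli'_eq_zero_of_odd (odd_two_mul_add_one n) (by omega)
  have heven : bernoulli' (2 * n + 2) = bernoulli (2 * n + 2) :=
    (bernoulli_eq_bernoulli'_of_ne_one (by omega)).symm
  have h1 := hsplit 1
  have h2 := hsplit 2
  simp only [Polynomial.bernoulli_eval_one, Polynomial.bernoulli_eval_two, hodd, heven, one_pow,
    mul_one] at h1 h2
  have hweight : ∀ k ∈ range (2 * n + 1 + 2),
      ((2 * n + 2).choose k : ℚ) * ((k : ℚ) - 1) * (1 - ((2 : ℚ) ^ k)⁻¹) * bernoulli k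
        = ((2 * n + 1 + 1).choose k : ℚ) * ((k : ℚ) - 1) * bernoulli k
          - ((2 : ℚ) ^ (2 * n + 2))⁻¹ * (((2 * n + 1 + 1).choose k : ℚ) * ((k : ℚ) - 1)
            * bernoulli k * 2 ^ (2 * n + 1 + 1 - k)) := by
    intro k hk
    have hk : k ≤ 2 * n + 2 := by have := mem_range.mp hk; omega
    rw [pow_sub₀ 2 two_ne_zero hk]
    field_simp
  rw [sum_congr rfl hweight, sum_sub_distrib, ← mul_sum, h1, h2]
  push_cast
  ring

theorem sum_choose_two_mul_mul_sub_one_mul_one_sub_inv_two_pow_mul_bernoulli (n : ℕ)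
    (hn : 1 ≤ n) :
    ∑ i ∈ range (n + 1), ((2 * n + 2).choose (2 * i) : ℚ) * (((2 * i : ℕ) : ℚ) - 1)
        * (1 - ((2 : ℚ) ^ (2 * i))⁻¹) * bernoulli (2 * i)
      = (2 * n + 2) * (2 * n + 1) / 2 ^ (2 * n + 2) := by
  set f : ℕ → ℚ := fun k =>
    ((2 * n + 2).choose k : ℚ) * ((k : ℚ) - 1) * (1 - ((2 : ℚ) ^ k)⁻¹) * bernoulli k
  have hf_odd (i : ℕ) : f (2 * i + 1) = 0 := by
    have h := sub_one_mul_bernoulli_of_odd (odd_two_mul_add_one i)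
    linear_combination ((2 * n + 2).choose (2 * i + 1) * (1 - ((2 : ℚ) ^ (2 * i + 1))⁻¹)) * h
  have heven : ∑ k ∈ range (2 * n + 2), f k = ∑ i ∈ range (n + 1), f (2 * i) :=
    sum_range_two_mul_of_odd_eq_zero f hf_odd (n + 1)
  have hfull := sum_choose_mul_sub_one_mul_one_sub_inv_two_pow_mul_bernoulli n hn
  rw [sum_range_succ, heven, Nat.choose_self] at hfull
  simp only [f] at hfull
  push_cast at hfull ⊢
  linear_combination hfull

theorem Nat.choose_add_three_mul (m a : ℕ) :
    (m + 3).choose (a + 3) * ((a + 3) * (a + 2) * (a + 1))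
      = m.choose a * ((m + 3) * (m + 2) * (m + 1)) := by
  have h1 : (m + 1) * m.choose a = (m + 1).choose (a + 1) * (a + 1) :=
    Nat.add_one_mul_choose_eq m a
  have h2 : (m + 2) * (m + 1).choose (a + 1) = (m + 2).choose (a + 2) * (a + 2) :=
    Nat.add_one_mul_choose_eq (m + 1) (a + 1)
  have h3 : (m + 3) * (m + 2).choose (a + 2) = (m + 3).choose (a + 3) * (a + 3) :=
    Nat.add_one_mul_choose_eq (m + 2) (a + 2)
  calc (m + 3).choose (a + 3) * ((a + 3) * (a + 2) * (a + 1))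
      = (m + 3).choose (a + 3) * (a + 3) * (a + 2) * (a + 1) := by ring
    _ = (m + 2).choose (a + 2) * (a + 2) * (m + 3) * (a + 1) := by rw [← h3]; ring
    _ = (m + 1).choose (a + 1) * (a + 1) * (m + 2) * (m + 3) := by rw [← h2]; ring
    _ = m.choose a * ((m + 3) * (m + 2) * (m + 1)) := by rw [← h1]; ring

theorem cast_choose_two_mul_sub_three_div (n g : ℕ) (hn : 1 ≤ n) (hg : 2 ≤ g) :
    ((2 * n - 1).choose (2 * g - 3) : ℚ) / (g * (g - 1))
      = 2 * ((2 * n + 2).choose (2 * g) * (((2 * g : ℕ) : ℚ) - 1))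
        / (n * (2 * n + 1) * (2 * n + 2)) := by
  have hn' : (1 : ℚ) ≤ n := by exact_mod_cast hn
  have hg' : (2 : ℚ) ≤ g := by exact_mod_cast hg
  have hg0 : (g : ℚ) * (g - 1) ≠ 0 := (mul_pos (by linarith) (by linarith)).ne'
  have hn0 : (n : ℚ) * (2 * n + 1) * (2 * n + 2) ≠ 0 :=
    (mul_pos (mul_pos (by linarith) (by linarith)) (by linarith)).ne'
  rw [div_eq_div_iff hg0 hn0]
  obtain ⟨e, rfl⟩ : ∃ e, n = e + 1 := ⟨n - 1, by omega⟩
  obtain ⟨d, rfl⟩ : ∃ d, g = d + 2 := ⟨g - 2, by omega⟩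
  have h := congrArg (Nat.cast : ℕ → ℚ) (Nat.choose_add_three_mul (2 * e + 1) (2 * d + 1))
  rw [show 2 * (e + 1) - 1 = 2 * e + 1 by omega, show 2 * (d + 2) - 3 = 2 * d + 1 by omega,
    show 2 * (e + 1) + 2 = 2 * e + 1 + 3 by omega, show 2 * (d + 2) = 2 * d + 1 + 3 by omega]
  push_cast at h ⊢
  linear_combination (-1 / 2 : ℚ) * h

/-- For every integer `n ≥ 1`,
`2·∑_{g=2}^{n} C(2n−1, 2g−3)·(1 − 2^{−2g})·B_{2g}/(g(g−1)) = (4^{−n} − 4^{−1})/n`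
as rational numbers, where `B_{2g}` is the `2g`-th Bernoulli number. -/
theorem theta_toda_degree_one_constraint (n : ℕ) (hn : 1 ≤ n) :
    2 * ∑ g ∈ Finset.Icc 2 n,
        ((2 * n - 1).choose (2 * g - 3) : ℚ) * (1 - (2 : ℚ) ^ (-(2 * (g : ℤ))))
          * (bernoulli (2 * g)) / ((g : ℚ) * ((g : ℚ) - 1))
      = ((4 : ℚ) ^ (-(n : ℤ)) - (4 : ℚ) ^ (-1 : ℤ)) / n := by
  have hsum := sum_choose_two_mul_mul_sub_one_mul_one_sub_inv_two_pow_mul_bernoulli n hn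
  set f : ℕ → ℚ := fun g => ((2 * n + 2).choose (2 * g) : ℚ) * (((2 * g : ℕ) : ℚ) - 1)
    * (1 - ((2 : ℚ) ^ (2 * g))⁻¹) * bernoulli (2 * g)
  have hterm : ∀ g ∈ Icc 2 n,
      ((2 * n - 1).choose (2 * g - 3) : ℚ) * (1 - (2 : ℚ) ^ (-(2 * (g : ℤ))))
          * (bernoulli (2 * g)) / ((g : ℚ) * ((g : ℚ) - 1))
        = 2 / (n * (2 * n + 1) * (2 * n + 2)) * f g := by
    intro g hg
    have hw : (2 : ℚ) ^ (-(2 * (g : ℤ))) = ((2 : ℚ) ^ (2 * g))⁻¹ := by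
      rw [zpow_neg]; norm_cast
    calc _ = ((2 * n - 1).choose (2 * g - 3) : ℚ) / (g * (g - 1))
          * (1 - (2 : ℚ) ^ (-(2 * (g : ℤ)))) * bernoulli (2 * g) := by ring
      _ = _ := by
        rw [cast_choose_two_mul_sub_three_div n g hn (mem_Icc.mp hg).1, hw]; ring
  have hf0 : f 0 = 0 := by simp [f]
  have hf1 : f 1 = (2 * n + 2) * (2 * n + 1) / 16 := by
    simp [f, Nat.cast_choose_two, bernoulli_two]; ring
  rw [sum_range_add_one_eq_add_add_sum_Icc_two f hn, hf0, hf1, zero_add] at hsum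
  have hn0 : (n : ℚ) ≠ 0 := by positivity
  rw [sum_congr rfl hterm, ← mul_sum, eq_sub_of_add_eq' hsum, zpow_neg, zpow_natCast,
    show (2 : ℚ) ^ (2 * n + 2) = 4 * 4 ^ n by rw [pow_add, pow_mul, mul_comm]; norm_num]
  field_simp
  ring
end

section
/- Let N ≥ 1 be an integer and let f : ℝ → ℝ be continuous. Then ∫_{[−2,2]^N} ∏_{1≤i<j≤N}(x_i − x_j)² · ∏_{i=1}^{N} f(x_i) dx₁⋯dx_N = N! · det( M ), where M is the N×N matrix with entries M_{ij} = ∫_{−2}^{2} t^{i+j} f(t) dt for 0 ≤ i, j ≤ N−1. (Andreief/Heine identity relating the squared-Vandermonde eigenvalue integral to the Hankel determinant of moments; this underlies the identification of the matrix-integral partition function with ∏ h_j².) -/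
/-!
Expanding both Vandermonde determinants by the Leibniz formula writes the integrand as a signed
double sum over permutations `σ, τ` of products `∏ᵢ xᵢ^(σ i) xᵢ^(τ i) f(xᵢ)`, each of which
factors by Fubini into `∏ᵢ m_{σ i + τ i}` with `mₖ = ∫ tᵏ f(t) dt`. For fixed `σ`, the sum over
`τ` is the Leibniz expansion of the Hankel determinant `det (m_{i+j})`, so the double sum is
`N!` times that determinant (Andreief's identity).
-/

open MeasureTheory Finset Equiv

namespace Matrix

variable {n R : Type*} [Fintype n] [DecidableEq n] [CommRing R]

theorem det_mul_det_eq_sum_perm_sum_perm (A B : Matrix n n R) :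
    A.det * B.det = ∑ σ : Perm n, ∑ τ : Perm n,
        ((Perm.sign σ : ℤ) : R) * (Perm.sign τ : ℤ) * ∏ i, A (σ i) i * B (τ i) i := by
  simp only [det_apply', sum_mul_sum, prod_mul_distrib]
  refine sum_congr rfl fun σ _ => sum_congr rfl fun τ _ => ?_
  ring

theorem sum_perm_sum_perm_sign_mul_prod (M : Matrix n n R) :
    ∑ σ : Perm n, ∑ τ : Perm n,
        ((Perm.sign σ : ℤ) : R) * (Perm.sign τ : ℤ) * ∏ i, M (σ i) (τ i)
      = (Fintype.card n).factorial * M.det := by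
  have row_sum (σ : Perm n) : ∑ τ : Perm n,
      ((Perm.sign σ : ℤ) : R) * (Perm.sign τ : ℤ) * ∏ i, M (σ i) (τ i) = M.det := by
    -- substituting `τ = π * σ` turns the sum into the Leibniz expansion of `det Mᵀ`
    rw [← det_transpose, det_apply', ← Equiv.sum_comp (Equiv.mulRight σ)]
    refine sum_congr rfl fun π _ => ?_
    have sign_sq : ((Perm.sign σ : ℤ) : R) * (Perm.sign σ : ℤ) = 1 := by
      rw [← Int.cast_mul, ← Units.val_mul, Int.units_mul_self, Units.val_one, Int.cast_one]
    rw [Equiv.coe_mulRight, Perm.sign_mul, Units.val_mul, Int.cast_mul, mul_left_comm,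
      ← mul_assoc, mul_assoc ((Perm.sign π : ℤ) : R), sign_sq, mul_one]
    simp only [Perm.coe_mul, Function.comp_apply, transpose_apply]
    rw [Equiv.prod_comp σ fun i => M i (π i)]
  simp only [row_sum, sum_const, card_univ, Fintype.card_perm, nsmul_eq_mul]

theorem det_vandermonde_sq {N : ℕ} (x : Fin N → R) :
    (vandermonde x).det ^ 2 = ∏ i, ∏ j ∈ Ioi i, (x i - x j) ^ 2 := by
  simp only [det_vandermonde, ← prod_pow]
  exact prod_congr rfl fun i _ => prod_congr rfl fun j _ => by ring

end Matrix

open Matrix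

section Andreief

variable {α 𝕜 n : Type*} [RCLike 𝕜] [MeasurableSpace α] [Fintype n] [DecidableEq n]

theorem integral_det_mul_det_eq_factorial_mul_det (μ : Measure α) [SigmaFinite μ]
    (φ ψ : n → α → 𝕜) (hφψ : ∀ i j, Integrable (fun t => φ i t * ψ j t) μ) :
    ∫ x : n → α, (of fun i j => φ i (x j)).det * (of fun i j => ψ i (x j)).det
        ∂(Measure.pi fun _ => μ)
      = (Fintype.card n).factorial * (of fun i j => ∫ t, φ i t * ψ j t ∂μ).det := by
  simp only [det_mul_det_eq_sum_perm_sum_perm, of_apply]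
  rw [← sum_perm_sum_perm_sign_mul_prod, integral_finsetSum _ fun σ _ =>
    integrable_finsetSum _ fun τ _ => (Integrable.fintype_prod fun i => hφψ (σ i) (τ i)).const_mul _]
  refine sum_congr rfl fun σ _ => ?_
  rw [integral_finsetSum _ fun τ _ =>
    (Integrable.fintype_prod fun i => hφψ (σ i) (τ i)).const_mul _]
  refine sum_congr rfl fun τ _ => ?_
  rw [integral_const_mul, integral_fintype_prod_eq_prod (fun i t => φ (σ i) t * ψ (τ i) t)]
  rfl

end Andreief

theorem integral_prod_sub_sq_mul_prod_eq_factorial_mul_det_moments {𝕜 : Type*} [RCLike 𝕜]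
    [MeasurableSpace 𝕜] {N : ℕ} (μ : Measure 𝕜) [SigmaFinite μ] (w : 𝕜 → 𝕜)
    (hw : ∀ k : ℕ, Integrable (fun t => t ^ k * w t) μ) :
    ∫ x : Fin N → 𝕜, (∏ i, ∏ j ∈ Ioi i, (x i - x j) ^ 2) * ∏ i, w (x i)
        ∂(Measure.pi fun _ => μ)
      = N.factorial * (of fun i j : Fin N => ∫ t, t ^ ((i : ℕ) + j) * w t ∂μ).det := by
  have hmoments : ∀ i j : ℕ, (fun t => t ^ i * (t ^ j * w t)) = fun t => t ^ (i + j) * w t :=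
    fun i j => funext fun t => by ring
  have hdet (x : Fin N → 𝕜) : (∏ i, ∏ j ∈ Ioi i, (x i - x j) ^ 2) * ∏ i, w (x i)
      = (of fun i j : Fin N => x j ^ (i : ℕ)).det
        * (of fun i j : Fin N => x j ^ (i : ℕ) * w (x j)).det := by
    calc (∏ i, ∏ j ∈ Ioi i, (x i - x j) ^ 2) * ∏ i, w (x i)
        = (vandermonde x)ᵀ.det * ((∏ i, w (x i)) * (vandermonde x)ᵀ.det) := by
          rw [det_transpose, ← det_vandermonde_sq]
          ring
      _ = _ := by
          rw [← det_mul_row]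
          congr 2
          ext i j
          simp only [vandermonde, transpose_apply, of_apply, mul_comm]
  simp only [hdet]
  rw [integral_det_mul_det_eq_factorial_mul_det μ (fun (i : Fin N) t => t ^ (i : ℕ))
    (fun (j : Fin N) t => t ^ (j : ℕ) * w t) fun i j => by simpa only [hmoments] using hw _]
  simp only [hmoments, Fintype.card_fin]

theorem andreief_identity_general (N : ℕ) (f : ℝ → ℝ) (hf : Continuous f) :
    ∫ x in (Set.univ.pi (fun _ => Set.Icc (-2 : ℝ) 2) : Set (Fin N → ℝ)),
        (∏ i : Fin N, ∏ j ∈ Finset.Ioi i, (x i - x j) ^ 2) * ∏ i : Fin N, f (x i)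
      = (N.factorial : ℝ) *
        (Matrix.of fun i j : Fin N =>
          ∫ t in (-2 : ℝ)..2, t ^ ((i : ℕ) + (j : ℕ)) * f t).det := by
  have hmoments (k : ℕ) :
      Integrable (fun t => t ^ k * f t) (volume.restrict (Set.Icc (-2 : ℝ) 2)) :=
    (continuous_pow k |>.mul hf).integrableOn_Icc
  rw [volume_pi, Measure.restrict_pi_pi,
    integral_prod_sub_sq_mul_prod_eq_factorial_mul_det_moments _ _ hmoments]
  simp only [intervalIntegral.integral_of_le (by norm_num : (-2 : ℝ) ≤ 2),
    integral_Icc_eq_integral_Ioc]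

/-- Andreief/Heine identity: for `N ≥ 1` and continuous
`f : ℝ → ℝ`,
`∫_{[−2,2]^N} ∏_{i<j}(x_i − x_j)² · ∏_i f(x_i) dx = N! · det(M)` where
`M_{ij} = ∫_{−2}^{2} t^{i+j} f(t) dt`, `0 ≤ i,j ≤ N−1`. -/
theorem andreief_identity (N : ℕ) (hN : 1 ≤ N) (f : ℝ → ℝ) (hf : Continuous f) :
    ∫ x in (Set.univ.pi (fun _ => Set.Icc (-2 : ℝ) 2) : Set (Fin N → ℝ)),
        (∏ i : Fin N, ∏ j ∈ Finset.Ioi i, (x i - x j) ^ 2) * ∏ i : Fin N, f (x i)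
      = (N.factorial : ℝ) *
        (Matrix.of fun i j : Fin N =>
          ∫ t in (-2 : ℝ)..2, t ^ ((i : ℕ) + (j : ℕ)) * f t).det :=
  andreief_identity_general N f hf
end

section
/- Let w : ℝ → ℝ be continuous. For each integer j ≥ 0 and s ∈ ℝ set m_j(s) = ∫_{−2}^{2} t^j e^{st} w(t) dt, and for N ≥ 1 set D_N(s) = det( m_{i+j}(s) )_{0≤i,j≤N−1}, with D₀ ≡ 1. Then each D_N is twice differentiable in s and for every N ≥ 1 and every s ∈ ℝ, D_N″(s)·D_N(s) − (D_N′(s))² = D_{N+1}(s)·D_{N−1}(s). Equivalently, wherever D_N ≠ 0, ∂²_s log D_N(s) = D_{N+1}(s)·D_{N−1}(s)/D_N(s)². (The Toda equation for the Hankel determinants of the exponentially deformed moments of a weight on [−2,2], which by the Andreief identity are the partition functions Z(N) of the Legendre-type matrix ensemble.) -/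
/-!
Differentiating under the integral sign gives `m_j' = m_{j+1}`. Differentiating
`D_N = det (m_{i+j})` column by column, the derivative of every column but the last is the next
column, so `D_N'` and `D_N''` are again minors of the `(N+1) × (N+1)` Hankel matrix `H`:
`D_N'` omits row `N` and column `N-1`, `D_N''` omits row and column `N-1`, and `D_N` omits row and
column `N`. The Toda equation is then the Desnanot–Jacobi identity for `H` and its last two rows
and columns, the two mixed minors being equal because `H` is symmetric.

Desnanot–Jacobi is proved by multiplying `A` with the identity matrix whose columns `p, q` are
replaced by the corresponding columns of `adj A`, and cancelling `det A` for the generic matrix.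
-/

open Finset

namespace Matrix

section DesnanotJacobi

variable {R : Type*} [CommRing R] {n : Type*} [Fintype n] [DecidableEq n]

theorem det_one_updateCol (p : n) (u : n → R) :
    det ((1 : Matrix n n R).updateCol p u) = u p := by
  simpa [one_apply] using det_updateCol_sum (1 : Matrix n n R) p u

theorem det_one_updateCol_updateCol {p q : n} (hpq : p ≠ q) (u v : n → R) :
    det (((1 : Matrix n n R).updateCol p u).updateCol q v) = u p * v q - u q * v p := by
  set N := (1 : Matrix n n R).updateCol p u
  have hv : v = ∑ k, v k • Pi.single k 1 := by
    ext i
    simp [Pi.single_apply]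
  have hexpand : det (N.updateCol q v) = ∑ k, v k * det (N.updateCol q (Pi.single k 1)) := by
    conv_lhs => rw [hv, ← cramer_apply, map_sum]
    simp [cramer_apply]
  have hq : det (N.updateCol q (Pi.single q 1)) = u p := by
    rw [← det_one_updateCol p u]
    congr 1
    ext i j
    by_cases hj : j = q <;> simp [N, hj, hpq.symm, one_apply, Pi.single_apply, eq_comm]
  have hp : det (N.updateCol q (Pi.single p 1)) = -u q := by
    have hswap : (N.updateCol q (Pi.single p 1)).submatrix id (Equiv.swap p q)
        = (1 : Matrix n n R).updateCol q u := by
      ext i j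
      rcases eq_or_ne j p with rfl | hjp
      · simp [N, hpq, one_apply, Pi.single_apply]
      rcases eq_or_ne j q with rfl | hjq
      · simp [N, hpq]
      · simp [N, Equiv.swap_apply_of_ne_of_ne hjp hjq, hjp, hjq]
    have h := det_permute' (Equiv.swap p q) (N.updateCol q (Pi.single p 1))
    rw [hswap, det_one_updateCol, Equiv.Perm.sign_swap hpq] at h
    simp [h]
  rw [hexpand, Fintype.sum_eq_add q p hpq.symm, hq, hp]
  · ring
  rintro k ⟨hkq, hkp⟩
  refine mul_eq_zero_of_right _ (det_zero_of_column_eq hkq.symm fun i => ?_)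
  simp [N, hkq, hkp, one_apply, Pi.single_apply, eq_comm]

theorem det_mul_desnanot_jacobi (A : Matrix n n R) {p q : n} (hpq : p ≠ q) :
    det A * (det (A.updateCol p (Pi.single p 1)) * det (A.updateCol q (Pi.single q 1))
      - det (A.updateCol q (Pi.single p 1)) * det (A.updateCol p (Pi.single q 1)))
      = det A * (det A * det ((A.updateCol p (Pi.single p 1)).updateCol q (Pi.single q 1))) := by
  set C := ((1 : Matrix n n R).updateCol p (cramer A (Pi.single p 1))).updateCol q
    (cramer A (Pi.single q 1))
  have hC : det C = det (A.updateCol p (Pi.single p 1)) * det (A.updateCol q (Pi.single q 1))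
      - det (A.updateCol q (Pi.single p 1)) * det (A.updateCol p (Pi.single q 1)) := by
    simp only [C, det_one_updateCol_updateCol hpq, cramer_apply]
  have hAC : A * C
      = (A.updateCol p (det A • Pi.single p 1)).updateCol q (det A • Pi.single q 1) := by
    rw [mul_updateCol, mul_updateCol, mul_one, mulVec_cramer, mulVec_cramer]
  rw [← hC, ← det_mul, hAC, det_updateCol_smul, updateCol_comm _ hpq, det_updateCol_smul,
    updateCol_comm _ hpq.symm]

/-- `det (A.updateCol q (Pi.single p 1))` is the `(p, q)` cofactor of `A`. -/
theorem desnanot_jacobi (A : Matrix n n R) {p q : n} (hpq : p ≠ q) :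
    det (A.updateCol p (Pi.single p 1)) * det (A.updateCol q (Pi.single q 1))
      - det (A.updateCol q (Pi.single p 1)) * det (A.updateCol p (Pi.single q 1))
      = det A * det ((A.updateCol p (Pi.single p 1)).updateCol q (Pi.single q 1)) := by
  let f := MvPolynomial.aeval (R := ℤ) fun ij : n × n => A ij.1 ij.2
  have hf : ∀ (B : Matrix n n (MvPolynomial (n × n) ℤ)) (i j : n),
      f.mapMatrix (B.updateCol j (Pi.single i 1)) = (f.mapMatrix B).updateCol j (Pi.single i 1) := by
    intro B i j
    rw [AlgHom.mapMatrix_apply, map_updateCol]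
    congr 1
    ext k
    by_cases hk : k = i <;> simp [hk]
  have hX := mul_left_cancel₀ (det_mvPolynomialX_ne_zero n ℤ)
    (det_mul_desnanot_jacobi (mvPolynomialX n n ℤ) hpq)
  simpa only [map_sub, map_mul, AlgHom.map_det, hf, f, mvPolynomialX_mapMatrix_aeval]
    using congrArg f hX

theorem det_updateCol_single_eq {k : ℕ} (A : Matrix (Fin (k + 1)) (Fin (k + 1)) R)
    (i j : Fin (k + 1)) :
    det (A.updateCol j (Pi.single i 1))
      = (-1) ^ (i + j : ℕ) * det (A.submatrix i.succAbove j.succAbove) := by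
  rw [det_succ_column _ j, Fintype.sum_eq_single i fun i' hi' => by simp [hi']]
  simp

theorem det_updateCol_single_self {k : ℕ} (A : Matrix (Fin (k + 1)) (Fin (k + 1)) R)
    (i : Fin (k + 1)) :
    det (A.updateCol i (Pi.single i 1)) = det (A.submatrix i.succAbove i.succAbove) := by
  rw [det_updateCol_single_eq, ← two_mul, pow_mul, neg_one_sq, one_pow, one_mul]

theorem desnanot_jacobi_succAbove {n : ℕ} (A : Matrix (Fin (n + 2)) (Fin (n + 2)) R) :
    det (A.submatrix (Fin.last n).castSucc.succAbove (Fin.last n).castSucc.succAbove)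
        * det (A.submatrix (Fin.last (n + 1)).succAbove (Fin.last (n + 1)).succAbove)
      - det (A.submatrix (Fin.last n).castSucc.succAbove (Fin.last (n + 1)).succAbove)
        * det (A.submatrix (Fin.last (n + 1)).succAbove (Fin.last n).castSucc.succAbove)
      = det A
        * det ((A.submatrix Fin.castSucc Fin.castSucc).submatrix Fin.castSucc Fin.castSucc) := by
  set p : Fin (n + 2) := (Fin.last n).castSucc
  set l : Fin (n + 2) := Fin.last (n + 1)
  have hinner : det ((A.updateCol p (Pi.single p 1)).updateCol l (Pi.single l 1))
      = det ((A.submatrix Fin.castSucc Fin.castSucc).submatrix Fin.castSucc Fin.castSucc) := by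
    have h : (A.updateCol p (Pi.single p 1)).submatrix Fin.castSucc Fin.castSucc
        = (A.submatrix Fin.castSucc Fin.castSucc).updateCol (Fin.last n)
            (Pi.single (Fin.last n) 1) := by
      ext i j
      simp [p, updateCol_apply, Pi.single_apply]
    rw [det_updateCol_single_self, Fin.succAbove_last, h, det_updateCol_single_self,
      Fin.succAbove_last]
  have hsign : (-1 : R) ^ ((p : ℕ) + l) * (-1) ^ ((l : ℕ) + p) = 1 := by
    rw [add_comm, ← mul_pow]
    simp
  have h := desnanot_jacobi A (Fin.castSucc_ne_last (Fin.last n))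
  rw [det_updateCol_single_self, det_updateCol_single_self, det_updateCol_single_eq,
    det_updateCol_single_eq, hinner] at h
  linear_combination h + det (A.submatrix p.succAbove l.succAbove)
    * det (A.submatrix l.succAbove p.succAbove) * hsign

end DesnanotJacobi

section Deriv

variable {𝕜 : Type*} [NontriviallyNormedField 𝕜] {𝔸 : Type*} [NormedCommRing 𝔸]
  [NormedAlgebra 𝕜 𝔸] {n : Type*} [Fintype n] [DecidableEq n]

theorem hasDerivAt_det {M : 𝕜 → Matrix n n 𝔸} {M' : Matrix n n 𝔸} {x : 𝕜}
    (h : ∀ i j, HasDerivAt (fun y => M y i j) (M' i j) x) :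
    HasDerivAt (fun y => det (M y)) (∑ j, det ((M x).updateCol j fun i => M' i j)) x := by
  simp only [det_apply']
  have hσ : ∀ σ : Equiv.Perm n, HasDerivAt (fun y => (Equiv.Perm.sign σ : 𝔸) * ∏ i, M y (σ i) i)
      ((Equiv.Perm.sign σ : 𝔸) * ∑ j, (∏ i ∈ univ.erase j, M x (σ i) i) * M' (σ j) j) x := by
    intro σ
    simpa only [smul_eq_mul] using
      (HasDerivAt.fun_finsetProd fun i _ => h (σ i) i).const_mul (Equiv.Perm.sign σ : 𝔸)
  refine (HasDerivAt.fun_sum fun σ _ => hσ σ).congr_deriv ?_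
  simp only [mul_sum]
  rw [sum_comm]
  refine sum_congr rfl fun j _ => sum_congr rfl fun σ _ => ?_
  have hupd : (fun i => (M x).updateCol j (fun i => M' i j) (σ i) i)
      = Function.update (fun i => M x (σ i) i) j (M' (σ j) j) := by
    ext i
    by_cases hi : i = j <;> simp [hi]
  rw [hupd, prod_update_of_mem (mem_univ j), sdiff_singleton_eq_erase]
  ring

end Deriv

def hankel {α : Type*} (m : ℕ → α) (N : ℕ) : Matrix (Fin N) (Fin N) α :=
  of fun i j => m (i + j)

section Hankel

variable {α : Type*}

@[simp]
theorem hankel_apply (m : ℕ → α) {N : ℕ} (i j : Fin N) : hankel m N i j = m (i + j) :=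
  rfl

theorem hankel_transpose (m : ℕ → α) (N : ℕ) : (hankel m N)ᵀ = hankel m N := by
  ext i j
  simp [add_comm]

theorem hankel_submatrix_castSucc (m : ℕ → α) (N : ℕ) :
    (hankel m (N + 1)).submatrix Fin.castSucc Fin.castSucc = hankel m N :=
  rfl

theorem det_hankel_submatrix_comm {R : Type*} [CommRing R] (m : ℕ → R) {k N : ℕ}
    (f g : Fin k → Fin N) :
    det ((hankel m N).submatrix f g) = det ((hankel m N).submatrix g f) := by
  rw [← det_transpose, transpose_submatrix, hankel_transpose]

variable {𝕜 : Type*} [NontriviallyNormedField 𝕜] {𝔸 : Type*} [NormedCommRing 𝔸]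
  [NormedAlgebra 𝕜 𝔸] {m : ℕ → 𝕜 → 𝔸}

theorem hasDerivAt_det_hankel_submatrix (hm : ∀ j x, HasDerivAt (m j) (m (j + 1) x) x) {n : ℕ}
    (r : Fin (n + 1) → Fin (n + 2)) (x : 𝕜) :
    HasDerivAt (fun y => det ((hankel (m · y) (n + 2)).submatrix r (Fin.last (n + 1)).succAbove))
      (det ((hankel (m · x) (n + 2)).submatrix r (Fin.last n).castSucc.succAbove)) x := by
  refine (hasDerivAt_det (M' := of fun i j => m (r i + j + 1) x) fun i j => ?_).congr_deriv ?_
  · simpa [Fin.succAbove_last] using hm (r i + j) x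
  rw [Fintype.sum_eq_single (Fin.last n)]
  · congr 1
    ext i j
    induction j using Fin.lastCases with
    | last => simp [add_assoc]
    | cast k => simp [Fin.succAbove_last]
  -- the derivative of column `k < n` is column `k + 1`
  intro k hk
  obtain ⟨k, rfl⟩ := Fin.exists_castSucc_eq.mpr hk
  refine det_zero_of_column_eq (Fin.castSucc_lt_succ (i := k)).ne fun i => ?_
  simp [updateCol_apply, Fin.succAbove_last, add_assoc]

theorem hasDerivAt_det_hankel (hm : ∀ j x, HasDerivAt (m j) (m (j + 1) x) x) (n : ℕ) (x : 𝕜) :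
    HasDerivAt (fun y => det (hankel (m · y) (n + 1)))
      (det ((hankel (m · x) (n + 2)).submatrix (Fin.last (n + 1)).succAbove
        (Fin.last n).castSucc.succAbove)) x := by
  simpa only [Fin.succAbove_last, hankel_submatrix_castSucc]
    using hasDerivAt_det_hankel_submatrix hm (Fin.last (n + 1)).succAbove x

theorem deriv_det_hankel (hm : ∀ j x, HasDerivAt (m j) (m (j + 1) x) x) (n : ℕ) :
    deriv (fun y => det (hankel (m · y) (n + 1)))
      = fun x => det ((hankel (m · x) (n + 2)).submatrix (Fin.last (n + 1)).succAbove
        (Fin.last n).castSucc.succAbove) :=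
  funext fun x => (hasDerivAt_det_hankel hm n x).deriv

theorem hasDerivAt_deriv_det_hankel (hm : ∀ j x, HasDerivAt (m j) (m (j + 1) x) x) (n : ℕ)
    (x : 𝕜) :
    HasDerivAt (deriv fun y => det (hankel (m · y) (n + 1)))
      (det ((hankel (m · x) (n + 2)).submatrix (Fin.last n).castSucc.succAbove
        (Fin.last n).castSucc.succAbove)) x := by
  simp only [deriv_det_hankel hm, det_hankel_submatrix_comm _ (Fin.last (n + 1)).succAbove]
  exact hasDerivAt_det_hankel_submatrix hm _ x

theorem hankel_toda (hm : ∀ j x, HasDerivAt (m j) (m (j + 1) x) x) (n : ℕ) (x : 𝕜) :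
    deriv (deriv fun y => det (hankel (m · y) (n + 1))) x * det (hankel (m · x) (n + 1))
        - deriv (fun y => det (hankel (m · y) (n + 1))) x ^ 2
      = det (hankel (m · x) (n + 2)) * det (hankel (m · x) n) := by
  rw [(hasDerivAt_deriv_det_hankel hm n x).deriv, deriv_det_hankel hm, sq]
  have h := desnanot_jacobi_succAbove (hankel (m · x) (n + 2))
  rw [det_hankel_submatrix_comm _ (Fin.last n).castSucc.succAbove
    (Fin.last (n + 1)).succAbove] at h
  simp only [Fin.succAbove_last, hankel_submatrix_castSucc] at h ⊢
  linear_combination h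

end Hankel

end Matrix

theorem hasDerivAt_intervalIntegral_of_continuous {E : Type*} [NormedAddCommGroup E]
    [NormedSpace ℝ E] {F F' : ℝ → ℝ → E} (hF : ∀ x, Continuous (F x))
    (hF' : Continuous (Function.uncurry F')) (hderiv : ∀ x t, HasDerivAt (F · t) (F' x t) x)
    (a b x₀ : ℝ) :
    HasDerivAt (fun x => ∫ t in a..b, F x t) (∫ t in a..b, F' x₀ t) x₀ := by
  obtain ⟨C, hC⟩ := ((isCompact_closedBall x₀ 1).prod isCompact_uIcc).exists_bound_of_continuousOn
    hF'.continuousOn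
  refine (intervalIntegral.hasDerivAt_integral_of_dominated_loc_of_deriv_le (bound := fun _ => C)
    (Metric.ball_mem_nhds x₀ one_pos)
    (Filter.Eventually.of_forall fun x => (hF x).aestronglyMeasurable)
    ((hF x₀).intervalIntegrable a b) (hF'.uncurry_left x₀).aestronglyMeasurable
    ?_ intervalIntegrable_const ?_).2
  · exact MeasureTheory.ae_of_all _ fun t ht x hx =>
      hC (x, t) ⟨Metric.ball_subset_closedBall hx, Set.uIoc_subset_uIcc ht⟩
  · exact MeasureTheory.ae_of_all _ fun t _ x _ => hderiv x t

theorem hasDerivAt_intervalIntegral_pow_mul_exp {w : ℝ → ℝ} (hw : Continuous w) (a b : ℝ)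
    (j : ℕ) (s : ℝ) :
    HasDerivAt (fun y => ∫ t in a..b, t ^ j * Real.exp (y * t) * w t)
      (∫ t in a..b, t ^ (j + 1) * Real.exp (s * t) * w t) s := by
  refine hasDerivAt_intervalIntegral_of_continuous
    (F' := fun y t => t ^ (j + 1) * Real.exp (y * t) * w t) (fun x => by fun_prop) (by fun_prop)
    (fun x t => ?_) a b s
  exact ((((hasDerivAt_id' x).mul_const t).exp.const_mul (t ^ j)).mul_const (w t)).congr_deriv
    (by ring)

open Matrix in
/-- Toda equation for Hankel determinants of exponentially
deformed moments: let `w : ℝ → ℝ` be continuous,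
`m_j(s) = ∫_{−2}^{2} t^j e^{st} w(t) dt`, and
`D_N(s) = det(m_{i+j}(s))_{0≤i,j≤N−1}` (so `D₀ ≡ 1`).  Then each `D_N` is
twice differentiable and for `N ≥ 1`,
`D_N″·D_N − (D_N′)² = D_{N+1}·D_{N−1}`. -/
theorem moment_hankel_toda (w : ℝ → ℝ) (hw : Continuous w)
    (D : ℕ → ℝ → ℝ)
    (hD : ∀ (N : ℕ) (s : ℝ),
      D N s = (Matrix.of fun i j : Fin N =>
        ∫ t in (-2 : ℝ)..2, t ^ ((i : ℕ) + (j : ℕ)) * Real.exp (s * t) * w t).det) :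
    (∀ N : ℕ, Differentiable ℝ (D N) ∧ Differentiable ℝ (deriv (D N))) ∧
    ∀ N : ℕ, 1 ≤ N → ∀ s : ℝ,
      deriv (deriv (D N)) s * D N s - (deriv (D N) s) ^ 2 = D (N + 1) s * D (N - 1) s := by
  let m : ℕ → ℝ → ℝ := fun j s => ∫ t in (-2 : ℝ)..2, t ^ j * Real.exp (s * t) * w t
  have hm : ∀ j s, HasDerivAt (m j) (m (j + 1) s) s :=
    hasDerivAt_intervalIntegral_pow_mul_exp hw (-2) 2
  have hDm : ∀ N, D N = fun s => det (hankel (m · s) N) := fun N => funext (hD N)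
  refine ⟨fun N => ?_, fun N hN s => ?_⟩
  · rw [hDm]
    cases N with
    | zero => simp
    | succ n => exact ⟨fun x => (hasDerivAt_det_hankel hm n x).differentiableAt,
        fun x => (hasDerivAt_deriv_det_hankel hm n x).differentiableAt⟩
  · obtain ⟨n, rfl⟩ := Nat.exists_eq_add_of_le' hN
    rw [hDm, hDm, hDm]
    exact hankel_toda hm n s
end

section
/- Let N ≥ 1 be an integer and let Q_N ∈ ℝ[X] denote the N-th derivative of the polynomial (X² − 4)^N. Then there exists a constant c > 0 such that for every x ∈ ℝ, (1/N!)·∫_{[−2,2]^N} ∏_{1≤i<j≤N}(t_i − t_j)² · ∏_{j=1}^{N}(x − t_j) dt₁⋯dt_N = c · Q_N(x). (The expected characteristic polynomial of the Legendre ensemble is, up to a positive constant, the rescaled Legendre polynomial P_N(x/2) given by Rodrigues' formula.) -/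
/-!
Write `V(t) = ∏_{i<j} (t_j - t_i)` and `μ` for Lebesgue measure on `[-2, 2]`. The averaged
characteristic polynomial `P(x) = ∫ V(t)² ∏ⱼ (x - tⱼ) dμᴺ(t)` has degree `N` and leading
coefficient `∫ V² > 0`. Since `V(t) ∏ⱼ (x - tⱼ) = V(t, x)`, Fubini gives
`∫ xᵏ P(x) dμ(x) = ∫ V(s) V(s₀, …, s_{N-1}) s_Nᵏ dμᴺ⁺¹(s)`; expanding the second Vandermonde
determinant writes the integrand as a combination of terms `V(s) ∏ sᵢ^{aᵢ}` with a repeated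
exponent, and each of them integrates to zero because it changes sign under the transposition of
two coordinates carrying that exponent. So `P` is orthogonal to all polynomials of degree `< N`,
and so is `Q_N`, by `N` integrations by parts against `(X² - 4)ᴺ`, which vanishes to order `N`
at `±2`. Two polynomials of degree `≤ N` with this property are proportional: the difference of
suitable multiples has degree `< N` and is orthogonal to itself.
-/

open MeasureTheory Polynomial Finset Matrix

section Vandermonde

variable {R : Type*} [CommRing R] {n : ℕ}

theorem Matrix.det_vandermonde_snoc (v : Fin n → R) (x : R) :
    (vandermonde (Fin.snoc v x : Fin (n + 1) → R)).det =
      (vandermonde v).det * ∏ j, (x - v j) := by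
  have hIoi (i : Fin n) :
      Ioi i.castSucc = cons (Fin.last n) ((Ioi i).map Fin.castSuccEmb) (by simp) := by
    rw [cons_eq_insert, Fin.map_castSuccEmb_Ioi, Ioo_insert_right (Fin.castSucc_lt_last i)]
    ext j
    simp [Fin.le_last]
  have hlast : Ioi (Fin.last n) = ∅ := Ioi_eq_empty.2 fun _ _ => Fin.le_last _
  simp only [det_vandermonde, Fin.prod_univ_castSucc, hIoi, hlast, prod_cons, prod_map,
    Fin.coe_castSuccEmb, Fin.snoc_castSucc, Fin.snoc_last, prod_mul_distrib, prod_empty, mul_one]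
  ring

theorem Matrix.det_vandermonde_comp_perm (v : Fin n → R) (σ : Equiv.Perm (Fin n)) :
    (vandermonde (v ∘ σ)).det = Equiv.Perm.sign σ * (vandermonde v).det :=
  det_permute σ (vandermonde v)

theorem Matrix.det_vandermonde_eq_sum_sign_mul_prod_pow (v : Fin n → R) :
    (vandermonde v).det = ∑ σ : Equiv.Perm (Fin n), Equiv.Perm.sign σ * ∏ i, v i ^ (σ i : ℕ) := by
  rw [← det_transpose, det_apply]
  simp [Units.smul_def]

theorem Matrix.det_vandermonde_sq_s7 (v : Fin n → R) :
    (vandermonde v).det ^ 2 = ∏ i, ∏ j ∈ Ioi i, (v i - v j) ^ 2 := by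
  simp_rw [det_vandermonde, ← prod_pow]
  exact prod_congr rfl fun i _ => prod_congr rfl fun j _ => by ring

variable [TopologicalSpace R] [IsTopologicalRing R]

@[fun_prop]
theorem Continuous.det_vandermonde {α : Type*} [TopologicalSpace α] {f : α → Fin n → R}
    (hf : Continuous f) : Continuous fun a => (vandermonde (f a)).det := by
  simp_rw [Matrix.det_vandermonde]
  fun_prop

@[fun_prop]
theorem Polynomial.continuous_coeff_prod_X_sub_C {ι : Type*} [Fintype ι] (k : ℕ) :
    Continuous fun t : ι → R => (∏ j, (X - C (t j))).coeff k := by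
  have h (t : ι → R) : (∏ j, (X - C (t j))).coeff k =
      MvPolynomial.eval t ((∏ j, (X - C (MvPolynomial.X j)) : (MvPolynomial ι R)[X]).coeff k) := by
    rw [← coeff_map]
    simp [Polynomial.map_prod]
  simp_rw [h]
  exact MvPolynomial.continuous_eval _

end Vandermonde

section ProductMeasure

variable {α E : Type*} [MeasurableSpace α] [NormedAddCommGroup E] [NormedSpace ℝ E]
  (μ : Measure α) [SigmaFinite μ]

theorem MeasureTheory.integral_comp_perm_pi {ι : Type*} [Fintype ι] [DecidableEq ι]
    (σ : Equiv.Perm ι) (f : (ι → α) → E) :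
    ∫ s, f (s ∘ σ) ∂Measure.pi (fun _ => μ) = ∫ s, f s ∂Measure.pi (fun _ => μ) := by
  refine Eq.trans ?_ ((measurePreserving_piCongrLeft (fun _ : ι => μ) σ.symm).integral_comp' f)
  congr 1 with s
  congr 1 with i
  simp [MeasurableEquiv.piCongrLeft, Equiv.piCongrLeft_apply]

theorem MeasureTheory.integral_pi_fin_succ_eq_integral_snoc {n : ℕ}
    {f : (Fin (n + 1) → α) → E} (hf : Integrable f (Measure.pi fun _ => μ)) :
    ∫ s, f s ∂Measure.pi (fun _ => μ) =
      ∫ x, ∫ t, f (Fin.snoc t x) ∂Measure.pi (fun _ => μ) ∂μ := by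
  have hmp := (measurePreserving_piFinSuccAbove (fun _ : Fin (n + 1) => μ) (Fin.last n)).symm
  have hsymm (p : α × (Fin n → α)) :
      (MeasurableEquiv.piFinSuccAbove (fun _ => α) (Fin.last n)).symm p = Fin.snoc p.2 p.1 := by
    simp [MeasurableEquiv.piFinSuccAbove, Fin.insertNthEquiv, Fin.insertNth_last']
  have hint := (hmp.integrable_comp_emb (MeasurableEquiv.measurableEmbedding _)).2 hf
  rw [← hmp.integral_comp']
  exact (integral_prod _ hint).trans (by simp only [Function.comp_apply, hsymm])

end ProductMeasure

theorem MeasureTheory.setIntegral_pos_of_continuous_of_mem_interior {X : Type*}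
    [TopologicalSpace X] [MeasurableSpace X] [OpensMeasurableSpace X] (μ : Measure X)
    [μ.IsOpenPosMeasure] {f : X → ℝ} {s : Set X} {x : X} (hf : Continuous f) (hf0 : 0 ≤ f)
    (hfs : IntegrableOn f s μ) (hx : x ∈ interior s) (hfx : f x ≠ 0) :
    0 < ∫ y in s, f y ∂μ := by
  rw [setIntegral_pos_iff_support_of_nonneg_ae (ae_of_all _ hf0) hfs]
  exact (IsOpen.measure_pos μ (hf.isOpen_support.inter isOpen_interior) ⟨x, hfx, hx⟩).trans_le
    (measure_mono (Set.inter_subset_inter_right _ interior_subset))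

section Antisymmetry

variable {n : ℕ} (μ : Measure ℝ) [SigmaFinite μ]

theorem integral_det_vandermonde_mul_prod_pow_eq_zero {a : Fin n → ℕ}
    (ha : ¬ Function.Injective a) :
    ∫ s, (vandermonde s).det * ∏ i, s i ^ a i ∂Measure.pi (fun _ => μ) = 0 := by
  obtain ⟨p, q, hpq, hne⟩ : ∃ p q, a p = a q ∧ p ≠ q := by
    simpa [Function.Injective] using ha
  have ha_swap (i : Fin n) : a (Equiv.swap p q i) = a i := by
    rw [Equiv.swap_apply_def]
    split_ifs <;> simp_all
  have hanti (s : Fin n → ℝ) :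
      (vandermonde (s ∘ Equiv.swap p q)).det * ∏ i, (s ∘ Equiv.swap p q) i ^ a i =
        -((vandermonde s).det * ∏ i, s i ^ a i) := by
    have hprod : ∏ i, s (Equiv.swap p q i) ^ a i = ∏ i, s i ^ a i := by
      rw [← Equiv.prod_comp (Equiv.swap p q) fun i => s i ^ a i]
      exact prod_congr rfl fun i _ => by rw [ha_swap]
    rw [det_vandermonde_comp_perm, Equiv.Perm.sign_swap hne, Function.comp_def, hprod]
    push_cast
    ring
  have h := integral_comp_perm_pi μ (Equiv.swap p q)
    fun s => (vandermonde s).det * ∏ i, s i ^ a i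
  simp only [hanti, integral_neg] at h
  linarith

theorem integral_det_vandermonde_mul_det_vandermonde_init_mul_pow_eq_zero {k : ℕ} (hk : k < n)
    (hint : ∀ a : Fin (n + 1) → ℕ,
      Integrable (fun s => (vandermonde s).det * ∏ i, s i ^ a i) (Measure.pi fun _ => μ)) :
    ∫ s, (vandermonde s).det * (vandermonde (Fin.init s)).det * s (Fin.last n) ^ k
      ∂Measure.pi (fun _ => μ) = 0 := by
  let a (σ : Equiv.Perm (Fin n)) : Fin (n + 1) → ℕ := Fin.snoc (fun i => (σ i : ℕ)) k
  have hexpand (s : Fin (n + 1) → ℝ) :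
      (vandermonde s).det * (vandermonde (Fin.init s)).det * s (Fin.last n) ^ k =
        ∑ σ, Equiv.Perm.sign σ * ((vandermonde s).det * ∏ j, s j ^ a σ j) := by
    rw [det_vandermonde_eq_sum_sign_mul_prod_pow (Fin.init s), mul_sum, sum_mul]
    refine sum_congr rfl fun σ _ => ?_
    simp only [a, Fin.prod_univ_castSucc, Fin.snoc_castSucc, Fin.snoc_last, Fin.init]
    ring
  -- the exponent `k` occurs both at the last index and at the index `σ⁻¹ k`
  have ha (σ : Equiv.Perm (Fin n)) : ¬ Function.Injective (a σ) := fun hinj =>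
    (Fin.castSucc_lt_last (σ.symm ⟨k, hk⟩)).ne (hinj (by simp [a]))
  simp_rw [hexpand]
  rw [integral_finsetSum _ fun σ _ => (hint (a σ)).const_mul _]
  simp [integral_const_mul, integral_det_vandermonde_mul_prod_pow_eq_zero μ (ha _)]

end Antisymmetry

section Heine

variable {n : ℕ} (μ : Measure ℝ)

/-- `∫ V(t)² ∏ⱼ (X - tⱼ) dμⁿ(t)`, integrated coefficientwise. -/
noncomputable def heinePolynomial (n : ℕ) : ℝ[X] :=
  ∑ k ∈ range (n + 1), C (∫ t, (vandermonde t).det ^ 2 * (∏ j, (X - C (t j))).coeff k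
    ∂Measure.pi fun _ : Fin n => μ) * X ^ k

theorem natDegree_heinePolynomial_le : (heinePolynomial μ n).natDegree ≤ n :=
  natDegree_sum_le_of_forall_le _ _ fun _ hk =>
    (natDegree_C_mul_X_pow_le _ _).trans (Nat.lt_succ_iff.1 (mem_range.1 hk))

theorem coeff_heinePolynomial_self :
    (heinePolynomial μ n).coeff n =
      ∫ t, (vandermonde t).det ^ 2 ∂Measure.pi fun _ : Fin n => μ := by
  have hmonic (t : Fin n → ℝ) : (∏ j, (X - C (t j))).coeff n = 1 := by
    simpa using (monic_prod_X_sub_C t univ).coeff_natDegree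
  simp [heinePolynomial, finsetSum_coeff, hmonic]

variable [IsFiniteMeasure μ] {K : Set ℝ} (hK : IsCompact K) (hμK : ∀ᵐ x ∂μ, x ∈ K)
include hK hμK

theorem Continuous.integrable_pi_of_ae_mem_compact {ι : Type*} [Fintype ι]
    {f : (ι → ℝ) → ℝ} (hf : Continuous f) : Integrable f (Measure.pi fun _ : ι => μ) := by
  rw [← Measure.restrict_eq_self_of_ae_mem hμK, ← Measure.restrict_pi_pi]
  exact hf.continuousOn.integrableOn_compact (isCompact_univ_pi fun _ => hK)

theorem eval_heinePolynomial (x : ℝ) :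
    (heinePolynomial μ n).eval x =
      ∫ t, (vandermonde t).det ^ 2 * ∏ j, (x - t j) ∂Measure.pi fun _ : Fin n => μ := by
  have hdeg (t : Fin n → ℝ) : (∏ j, (X - C (t j))).natDegree < n + 1 := by simp
  have hint (k : ℕ) : Integrable (fun t : Fin n → ℝ =>
      (vandermonde t).det ^ 2 * (∏ j, (X - C (t j))).coeff k * x ^ k) (Measure.pi fun _ => μ) :=
    Continuous.integrable_pi_of_ae_mem_compact μ hK hμK (by fun_prop)
  simp only [heinePolynomial, eval_finsetSum, eval_mul, eval_C, eval_pow, eval_X,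
    ← integral_mul_const]
  rw [← integral_finsetSum _ fun k _ => hint k]
  congr 1 with t
  simp_rw [mul_assoc, ← mul_sum, ← eval_eq_sum_range' (hdeg t), eval_prod, eval_sub, eval_X,
    eval_C]

theorem integral_pow_mul_eval_heinePolynomial_eq_zero {k : ℕ} (hk : k < n) :
    ∫ x, x ^ k * (heinePolynomial μ n).eval x ∂μ = 0 := by
  have hsnoc (x : ℝ) (t : Fin n → ℝ) : x ^ k * ((vandermonde t).det ^ 2 * ∏ j, (x - t j)) =
      (vandermonde (Fin.snoc t x : Fin (n + 1) → ℝ)).det * (vandermonde t).det * x ^ k := by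
    rw [det_vandermonde_snoc]
    ring
  have hcont : Continuous fun s : Fin (n + 1) → ℝ =>
      (vandermonde s).det * (vandermonde (Fin.init s)).det * s (Fin.last n) ^ k := by
    have : Continuous fun s : Fin (n + 1) → ℝ => Fin.init s :=
      continuous_pi fun i => continuous_apply _
    fun_prop
  have hfubini := integral_pi_fin_succ_eq_integral_snoc μ
    (hcont.integrable_pi_of_ae_mem_compact μ hK hμK)
  simp only [Fin.init_snoc, Fin.snoc_last] at hfubini
  simp_rw [eval_heinePolynomial μ hK hμK, ← integral_const_mul, hsnoc, ← hfubini]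
  exact integral_det_vandermonde_mul_det_vandermonde_init_mul_pow_eq_zero μ hk fun a =>
    Continuous.integrable_pi_of_ae_mem_compact μ hK hμK (by fun_prop)

end Heine

theorem eval_heinePolynomial_restrict_Icc (a b : ℝ) (n : ℕ) (x : ℝ) :
    (heinePolynomial (volume.restrict (Set.Icc a b)) n).eval x =
      ∫ t in Set.univ.pi (fun _ => Set.Icc a b),
        (∏ i : Fin n, ∏ j ∈ Ioi i, (t i - t j) ^ 2) * ∏ j, (x - t j) := by
  rw [eval_heinePolynomial _ isCompact_Icc (ae_restrict_mem measurableSet_Icc), volume_pi,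
    Measure.restrict_pi_pi]
  simp_rw [det_vandermonde_sq_s7]

theorem integral_det_vandermonde_sq_pos {a b : ℝ} (hab : a < b) (n : ℕ) :
    0 < ∫ t, (vandermonde t).det ^ 2
      ∂Measure.pi fun _ : Fin n => volume.restrict (Set.Icc a b) := by
  let e := (Set.Ioo_infinite hab).natEmbedding
  have hcont : Continuous fun t : Fin n → ℝ => (vandermonde t).det ^ 2 := by fun_prop
  rw [← Measure.restrict_pi_pi, ← volume_pi]
  refine setIntegral_pos_of_continuous_of_mem_interior volume (x := fun i => e i) hcont
    (fun t => sq_nonneg _)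
    (hcont.continuousOn.integrableOn_compact (isCompact_univ_pi fun _ => isCompact_Icc)) ?_ ?_
  · rw [interior_pi_set Set.finite_univ]
    simp [interior_Icc]
  · exact pow_ne_zero 2 (det_vandermonde_ne_zero_iff.2
      (Subtype.val_injective.comp (e.injective.comp Fin.val_injective)))

theorem Polynomial.eq_zero_of_integral_pow_mul_eval_eq_zero {a b : ℝ} (hab : a < b) {n : ℕ}
    {r : ℝ[X]} (hr : r.degree < n) (h : ∀ k < n, ∫ x in Set.Icc a b, x ^ k * r.eval x = 0) :
    r = 0 := by
  by_contra hr0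
  have hr' : r.natDegree < n := (natDegree_lt_iff_degree_lt hr0).2 hr
  have hsq : ∫ x in Set.Icc a b, r.eval x ^ 2 = 0 := by
    have hexpand (x : ℝ) : r.eval x ^ 2 = ∑ k ∈ range n, r.coeff k * (x ^ k * r.eval x) := by
      rw [sq]
      nth_rw 1 [eval_eq_sum_range' hr']
      rw [sum_mul]
      exact sum_congr rfl fun k _ => by ring
    simp_rw [hexpand]
    rw [integral_finsetSum _ fun k _ =>
      ((by fun_prop : Continuous fun x => x ^ k * r.eval x).integrableOn_Icc).const_mul _]
    exact sum_eq_zero fun k hk => by rw [integral_const_mul, h k (mem_range.1 hk), mul_zero]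
  obtain ⟨x, hx, hrx⟩ := (Set.Ioo_infinite hab).exists_notMem_finset r.roots.toFinset
  refine (setIntegral_pos_of_continuous_of_mem_interior volume (r.continuous.pow 2)
    (fun x => sq_nonneg _) (r.continuous.pow 2).integrableOn_Icc (by rwa [interior_Icc])
    ?_).ne' hsq
  simpa [hr0] using hrx

theorem Polynomial.eq_C_mul_of_integral_pow_mul_eval_eq_zero {a b : ℝ} (hab : a < b) {n : ℕ}
    {p q : ℝ[X]} (hp : p.natDegree ≤ n) (hq : q.natDegree ≤ n) (hqn : q.coeff n ≠ 0)
    (hpo : ∀ k < n, ∫ x in Set.Icc a b, x ^ k * p.eval x = 0)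
    (hqo : ∀ k < n, ∫ x in Set.Icc a b, x ^ k * q.eval x = 0) :
    p = C (p.coeff n / q.coeff n) * q := by
  set c := p.coeff n / q.coeff n
  rw [← sub_eq_zero]
  refine eq_zero_of_integral_pow_mul_eval_eq_zero hab (n := n) ?_ fun k hk => ?_
  · refine degree_lt_iff_coeff_zero _ _ |>.2 fun m hm => ?_
    rcases (Nat.cast_le.1 hm).eq_or_lt with rfl | hm
    · simp [c, hqn]
    · simp [coeff_eq_zero_of_natDegree_lt (hp.trans_lt hm),
        coeff_eq_zero_of_natDegree_lt (hq.trans_lt hm)]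
  · have hint (r : ℝ[X]) : IntegrableOn (fun x => x ^ k * r.eval x) (Set.Icc a b) :=
      (by fun_prop : Continuous fun x => x ^ k * r.eval x).integrableOn_Icc
    simp_rw [eval_sub, eval_mul, eval_C, mul_sub, mul_left_comm _ c]
    rw [integral_sub (hint p) ((hint q).const_mul c), integral_const_mul, hpo k hk, hqo k hk]
    simp

theorem Polynomial.integral_eval_mul_eval_iterate_derivative_eq_zero {a b : ℝ} {f : ℝ[X]}
    {n : ℕ} (ha : (X - C a) ^ n ∣ f) (hb : (X - C b) ^ n ∣ f) {j : ℕ} (hj : j ≤ n) {q : ℝ[X]}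
    (hq : q.natDegree < j) :
    ∫ x in a..b, q.eval x * (derivative^[j] f).eval x = 0 := by
  induction j generalizing q with
  | zero => exact absurd hq (Nat.not_lt_zero _)
  | succ j ih =>
    set F := derivative^[j] f
    have hroot {c : ℝ} (hc : (X - C c) ^ n ∣ f) : F.eval c = 0 :=
      dvd_iff_isRoot.1 <| (dvd_pow_self _ (by omega)).trans
        (pow_sub_dvd_iterate_derivative_of_pow_dvd j hc)
    rw [Function.iterate_succ_apply', intervalIntegral.integral_mul_deriv_eq_deriv_mul
      (fun x _ => q.hasDerivAt x) (fun x _ => F.hasDerivAt x)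
      (q.derivative.continuous.intervalIntegrable _ _)
      (F.derivative.continuous.intervalIntegrable _ _), hroot ha, hroot hb]
    rcases eq_or_ne q.natDegree 0 with hq0 | hq0
    · simp [derivative_of_natDegree_zero hq0]
    · simp [ih (by omega) ((natDegree_derivative_lt hq0).trans_le (by omega))]

section Rodrigues

/-- Rodrigues' formula: up to normalisation, the degree `n` Legendre polynomial of `[a, b]`. -/
noncomputable def rodriguesPolynomial (a b : ℝ) (n : ℕ) : ℝ[X] :=
  derivative^[n] (((X - C a) * (X - C b)) ^ n)

variable (a b : ℝ) (n : ℕ)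

theorem Polynomial.monic_X_sub_C_mul_X_sub_C_pow : (((X - C a) * (X - C b)) ^ n).Monic :=
  ((monic_X_sub_C a).mul (monic_X_sub_C b)).pow n

theorem Polynomial.natDegree_X_sub_C_mul_X_sub_C_pow :
    (((X - C a) * (X - C b)) ^ n).natDegree = 2 * n := by
  rw [natDegree_pow, (monic_X_sub_C a).natDegree_mul (monic_X_sub_C b)]
  simp [mul_comm]

theorem natDegree_rodriguesPolynomial_le : (rodriguesPolynomial a b n).natDegree ≤ n :=
  (natDegree_iterate_derivative _ _).trans (by rw [natDegree_X_sub_C_mul_X_sub_C_pow]; omega)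

theorem coeff_rodriguesPolynomial_self :
    (rodriguesPolynomial a b n).coeff n = ((2 * n).descFactorial n : ℝ) := by
  have hlead : (((X - C a) * (X - C b)) ^ n).coeff (n + n) = 1 := by
    rw [← two_mul, ← natDegree_X_sub_C_mul_X_sub_C_pow a b]
    exact (monic_X_sub_C_mul_X_sub_C_pow a b n).coeff_natDegree
  rw [rodriguesPolynomial, coeff_iterate_derivative, hlead, two_mul]
  simp

end Rodrigues

theorem iterate_derivative_X_sq_sub_four_pow (n : ℕ) :
    derivative^[n] ((X ^ 2 - 4 : ℝ[X]) ^ n) = rodriguesPolynomial (-2) 2 n := by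
  rw [show (X ^ 2 - 4 : ℝ[X]) = (X - C (-2)) * (X - C 2) by simp only [map_neg, map_ofNat]; ring]
  rfl

theorem integral_pow_mul_eval_rodriguesPolynomial_eq_zero {a b : ℝ} (hab : a ≤ b) {n k : ℕ}
    (hk : k < n) : ∫ x in Set.Icc a b, x ^ k * (rodriguesPolynomial a b n).eval x = 0 := by
  rw [integral_Icc_eq_integral_Ioc, ← intervalIntegral.integral_of_le hab, rodriguesPolynomial]
  simpa using integral_eval_mul_eval_iterate_derivative_eq_zero (q := X ^ k)
    (by rw [mul_pow]; exact dvd_mul_right _ _) (by rw [mul_pow]; exact dvd_mul_left _ _) le_rfl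
    (by simpa using hk)

theorem legendre_ensemble_char_poly_general (N : ℕ) :
    ∃ c : ℝ, 0 < c ∧ ∀ x : ℝ,
      (1 / (N.factorial : ℝ)) *
        ∫ t in (Set.univ.pi (fun _ => Set.Icc (-2 : ℝ) 2) : Set (Fin N → ℝ)),
          (∏ i : Fin N, ∏ j ∈ Finset.Ioi i, (t i - t j) ^ 2) * ∏ j : Fin N, (x - t j)
      = c * (derivative^[N] ((X ^ 2 - 4 : ℝ[X]) ^ N)).eval x := by
  simp_rw [← eval_heinePolynomial_restrict_Icc, iterate_derivative_X_sq_sub_four_pow]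
  set μ := volume.restrict (Set.Icc (-2 : ℝ) 2)
  set P := heinePolynomial μ N
  set Q := rodriguesPolynomial (-2) 2 N
  have hPpos : 0 < P.coeff N :=
    (coeff_heinePolynomial_self μ).symm ▸ integral_det_vandermonde_sq_pos (by norm_num) N
  have hQpos : 0 < Q.coeff N := by
    rw [coeff_rodriguesPolynomial_self]
    exact_mod_cast Nat.descFactorial_pos.2 (by omega)
  have hPQ : P = C (P.coeff N / Q.coeff N) * Q :=
    eq_C_mul_of_integral_pow_mul_eval_eq_zero (by norm_num) (natDegree_heinePolynomial_le μ)
      (natDegree_rodriguesPolynomial_le _ _ _) hQpos.ne'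
      (fun k hk => integral_pow_mul_eval_heinePolynomial_eq_zero μ isCompact_Icc
        (ae_restrict_mem measurableSet_Icc) hk)
      (fun k hk => integral_pow_mul_eval_rodriguesPolynomial_eq_zero (by norm_num) hk)
  refine ⟨P.coeff N / Q.coeff N / N.factorial, by positivity, fun x => ?_⟩
  rw [congrArg (eval x) hPQ, eval_mul, eval_C]
  field_simp

/-- for `N ≥ 1` and `Q_N = (d/dX)^N (X² − 4)^N ∈ ℝ[X]`
(Rodrigues' formula, so `Q_N` is proportional to the Legendre polynomial
`P_N(x/2)`), there exists `c > 0` such that for all `x ∈ ℝ`,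
`(1/N!)·∫_{[−2,2]^N} ∏_{i<j}(t_i − t_j)² · ∏_j (x − t_j) dt = c·Q_N(x)`. -/
theorem legendre_ensemble_char_poly (N : ℕ) (hN : 1 ≤ N) :
    ∃ c : ℝ, 0 < c ∧ ∀ x : ℝ,
      (1 / (N.factorial : ℝ)) *
        ∫ t in (Set.univ.pi (fun _ => Set.Icc (-2 : ℝ) 2) : Set (Fin N → ℝ)),
          (∏ i : Fin N, ∏ j ∈ Finset.Ioi i, (t i - t j) ^ 2) * ∏ j : Fin N, (x - t j)
      = c * (derivative^[N] ((X ^ 2 - 4 : ℝ[X]) ^ N)).eval x :=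
  legendre_ensemble_char_poly_general N
end

section
/- Let ℏ be a nonzero real number and let ψ : (0, ∞) → ℝ be twice differentiable. Define ψ̂ : (0, ∞) → ℝ by ψ̂(x) = x^{−1/ℏ}·ψ(x). Then ψ̂ is twice differentiable and for every x > 0, (4 − x²)ℏ²·ψ̂″(x) − 2xℏ·(1 + ℏ − 4/x²)·ψ̂′(x) + (4/x²)(1 − ℏ)·ψ̂(x) = x^{−1/ℏ}·[ (4 − x²)ℏ²·ψ″(x) − 2xℏ²·ψ′(x) + (1 + ℏ)·ψ(x) ]. In particular, if ψ satisfies the quantum curve equation (4 − x²)ℏ²ψ″ − 2xℏ²ψ′ + (1 + ℏ)ψ = 0 on (0, ∞), then ψ̂ satisfies (4 − x²)ℏ²ψ̂″ − 2xℏ(1 + ℏ − 4/x²)ψ̂′ + (4/x²)(1 − ℏ)ψ̂ = 0 on (0, ∞). -/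
/-!
Writing `a = -1/ℏ`, the product rule gives `ψ̂′ = x^a (ψ′ + (a/x) ψ)` and
`ψ̂″ = x^a (ψ″ + (2a/x) ψ′ + (a(a-1)/x²) ψ)`. After factoring out `x^a`, the transformed
operator applied to `ψ̂` becomes a polynomial expression in `ψ, ψ′, ψ″`, and the relation
`aℏ = -1` turns its coefficients into those of the quantum curve operator.
-/

open Filter Topology

section RpowMul

variable {g : ℝ → ℝ} {g' a x : ℝ}

theorem HasDerivAt.rpow_const_mul (hg : HasDerivAt g g' x) (hx : 0 < x) :
    HasDerivAt (fun y => y ^ a * g y) (x ^ a * (g' + a / x * g x)) x := by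
  refine ((Real.hasDerivAt_rpow_const (p := a) (Or.inl hx.ne')).mul hg).congr_deriv ?_
  rw [Real.rpow_sub_one hx.ne']
  ring

theorem hasDerivAt_rpow_const_mul_of_differentiableAt {ψ : ℝ → ℝ} (hψ : DifferentiableAt ℝ ψ x)
    (hx : 0 < x) :
    HasDerivAt (fun y => y ^ a * ψ y) (x ^ a * (deriv ψ x + a / x * ψ x)) x :=
  hψ.hasDerivAt.rpow_const_mul hx

theorem hasDerivAt_deriv_rpow_const_mul {ψ : ℝ → ℝ} (hψ : ∀ᶠ y in 𝓝 x, DifferentiableAt ℝ ψ y)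
    (hψ' : DifferentiableAt ℝ (deriv ψ) x) (hx : 0 < x) :
    HasDerivAt (deriv fun y => y ^ a * ψ y)
      (x ^ a * (deriv (deriv ψ) x + 2 * a / x * deriv ψ x + a * (a - 1) / x ^ 2 * ψ x)) x := by
  have hderiv :
      deriv (fun y => y ^ a * ψ y) =ᶠ[𝓝 x] fun y => y ^ a * (deriv ψ y + a / y * ψ y) := by
    filter_upwards [hψ, Ioi_mem_nhds hx] with y hy hy₀
    exact (hasDerivAt_rpow_const_mul_of_differentiableAt hy hy₀).deriv
  have hinner : HasDerivAt (fun y => deriv ψ y + a / y * ψ y)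
      (deriv (deriv ψ) x + ((0 * x - a * 1) / x ^ 2 * ψ x + a / x * deriv ψ x)) x :=
    hψ'.hasDerivAt.add <|
      ((hasDerivAt_const x a).div (hasDerivAt_id x) hx.ne').mul hψ.self_of_nhds.hasDerivAt
  refine ((hinner.rpow_const_mul hx).congr_of_eventuallyEq hderiv).congr_deriv ?_
  field_simp
  ring

end RpowMul

theorem quantum_curve_gauge_identity {h a x : ℝ} (hx : x ≠ 0) (ha : a * h = -1) (p p' p'' : ℝ) :
    (4 - x ^ 2) * h ^ 2 * (p'' + 2 * a / x * p' + a * (a - 1) / x ^ 2 * p)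
        - 2 * x * h * (1 + h - 4 / x ^ 2) * (p' + a / x * p) + 4 / x ^ 2 * (1 - h) * p
      = (4 - x ^ 2) * h ^ 2 * p'' - 2 * x * h ^ 2 * p' + (1 + h) * p := by
  have hh : h ≠ 0 := by rintro rfl; simp at ha
  obtain rfl : a = -1 / h := by rw [eq_div_iff hh, ha]
  field_simp
  ring

/-- for `ℏ ≠ 0` and `ψ` twice differentiable on `(0, ∞)`, the
function `ψ̂(x) = x^{−1/ℏ}·ψ(x)` is twice differentiable on `(0, ∞)` and
satisfies, for every `x > 0`,
`(4 − x²)ℏ²ψ̂″ − 2xℏ(1 + ℏ − 4/x²)ψ̂′ + (4/x²)(1 − ℏ)ψ̂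
  = x^{−1/ℏ}·[(4 − x²)ℏ²ψ″ − 2xℏ²ψ′ + (1 + ℏ)ψ]`.
In particular, if `ψ` satisfies the quantum curve equation on `(0, ∞)`, then
`ψ̂` satisfies the transformed equation on `(0, ∞)`. -/
theorem quantum_curve_gauge_transform (h : ℝ) (hh : h ≠ 0) (ψ : ℝ → ℝ)
    (hψ : ∀ x : ℝ, 0 < x → DifferentiableAt ℝ ψ x ∧ DifferentiableAt ℝ (deriv ψ) x)
    (ψhat : ℝ → ℝ) (hψhat : ∀ x : ℝ, ψhat x = x ^ (-(1 / h)) * ψ x) :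
    (∀ x : ℝ, 0 < x → DifferentiableAt ℝ ψhat x ∧ DifferentiableAt ℝ (deriv ψhat) x) ∧
    (∀ x : ℝ, 0 < x →
      (4 - x ^ 2) * h ^ 2 * deriv (deriv ψhat) x
        - 2 * x * h * (1 + h - 4 / x ^ 2) * deriv ψhat x
        + (4 / x ^ 2) * (1 - h) * ψhat x
      = x ^ (-(1 / h)) *
          ((4 - x ^ 2) * h ^ 2 * deriv (deriv ψ) x - 2 * x * h ^ 2 * deriv ψ x
            + (1 + h) * ψ x)) ∧
    ((∀ x : ℝ, 0 < x →
        (4 - x ^ 2) * h ^ 2 * deriv (deriv ψ) x - 2 * x * h ^ 2 * deriv ψ x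
          + (1 + h) * ψ x = 0) →
      ∀ x : ℝ, 0 < x →
        (4 - x ^ 2) * h ^ 2 * deriv (deriv ψhat) x
          - 2 * x * h * (1 + h - 4 / x ^ 2) * deriv ψhat x
          + (4 / x ^ 2) * (1 - h) * ψhat x = 0) := by
  set a : ℝ := -(1 / h)
  have ha : a * h = -1 := by simp [a, hh]
  obtain rfl : ψhat = fun y => y ^ a * ψ y := funext hψhat
  have hfirst (x : ℝ) (hx : 0 < x) :=
    hasDerivAt_rpow_const_mul_of_differentiableAt (a := a) (hψ x hx).1 hx
  have hsecond (x : ℝ) (hx : 0 < x) :=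
    hasDerivAt_deriv_rpow_const_mul (a := a)
      (eventually_of_mem (Ioi_mem_nhds hx) fun y hy => (hψ y hy).1) (hψ x hx).2 hx
  have hidentity : ∀ x : ℝ, 0 < x →
      (4 - x ^ 2) * h ^ 2 * deriv (deriv fun y => y ^ a * ψ y) x
        - 2 * x * h * (1 + h - 4 / x ^ 2) * deriv (fun y => y ^ a * ψ y) x
        + (4 / x ^ 2) * (1 - h) * (x ^ a * ψ x)
      = x ^ a * ((4 - x ^ 2) * h ^ 2 * deriv (deriv ψ) x - 2 * x * h ^ 2 * deriv ψ x
          + (1 + h) * ψ x) := by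
    intro x hx
    rw [(hsecond x hx).deriv, (hfirst x hx).deriv, ← quantum_curve_gauge_identity hx.ne' ha]
    ring
  refine ⟨fun x hx => ⟨(hfirst x hx).differentiableAt, (hsecond x hx).differentiableAt⟩,
    hidentity, fun hcurve x hx => ?_⟩
  rw [hidentity x hx, hcurve x hx, mul_zero]
end

section
/- Work in the field ℚ(h) of rational functions in one variable h over ℚ. Define a sequence G_d ∈ ℚ(h) for d ≥ −1 by G_{−1} = 0, G₀ = −h^{−2}, and for d ≥ 1, G_d = [ (1 − (2d² − 3d + 3/2)·h²)·G_{d−1} + h²·G_{d−2} ] / ( d²·(1 − (d − 1/2)²·h²) ), which is the recursion d²(1 − (d − 1/2)²h²)G_d = (1 − (2d² − 3d + 3/2)h²)G_{d−1} + h²G_{d−2} satisfied by the degree-d one-point Θ-Gromov–Witten series of P¹. Then for every d ≥ 0, the rational function h² · ∏_{m=1}^{d}(4 − (2m−1)²·h²) · G_d is a polynomial in h, i.e. lies in ℚ[h] ⊂ ℚ(h). (Hence G_d is a rational function of h² with poles only at h² = 0 and h² = 4/(2m−1)² for 1 ≤ m ≤ d, the pole at each 4/(2m−1)² being simple.) 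-/
open RatFunc Polynomial

/-!
Clear denominators: with `P_d = ∏_{m ≤ d} (4 - (2m - 1)² h²)`, the sequence
`F_d = h² P_d G_d` starts with `F_0 = -1`, `F_1 = 2h² - 4`, and multiplying the recursion
by `4 h² P_{d-1}` turns it into
`d² F_d = (4 - (8d² - 12d + 6) h²) F_{d-1} + 4h² (4 - (2d - 3)² h²) F_{d-2}`,
because `4 (1 - (d - 1/2)² h²) = 4 - (2d - 1)² h²` is exactly the new factor of `P_d`.
The coefficients are polynomials in `h` and `d²` is a unit of `ℚ`, so every `F_d` lies in
the `ℚ`-subalgebra `ℚ[h]`.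
-/

theorem Subalgebra.mem_of_linear_recurrence {k R : Type*} [Field k] [CommRing R]
    [Algebra k R] (S : Subalgebra k R) {F a b : ℕ → R} {c : ℕ → k} (hc : ∀ n, c n ≠ 0)
    (hF : ∀ n, algebraMap k R (c n) * F (n + 2) = a n * F (n + 1) + b n * F n)
    (ha : ∀ n, a n ∈ S) (hb : ∀ n, b n ∈ S)
    (h0 : F 0 ∈ S) (h1 : F 1 ∈ S) (n : ℕ) : F n ∈ S := by
  induction n using Nat.twoStepInduction with
  | zero => exact h0
  | one => exact h1
  | more n ih₀ ih₁ =>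
    have hsolve : F (n + 2) = algebraMap k R (c n)⁻¹ * (a n * F (n + 1) + b n * F n) := by
      rw [← hF, ← mul_assoc, ← map_mul, inv_mul_cancel₀ (hc n), map_one, one_mul]
    rw [hsolve]
    exact mul_mem (S.algebraMap_mem _) (add_mem (mul_mem (ha n) ih₁) (mul_mem (hb n) ih₀))

section
variable {K : Type*} [Field K]

def thetaDenom (x : K) (d : ℕ) : K :=
  ∏ m ∈ Finset.Icc 1 d, (4 - (2 * (m : K) - 1) ^ 2 * x ^ 2)

lemma thetaDenom_succ (x : K) (d : ℕ) :
    thetaDenom x (d + 1) = thetaDenom x d * (4 - (2 * (d : K) + 1) ^ 2 * x ^ 2) := by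
  unfold thetaDenom
  rw [Finset.prod_Icc_succ_top (by omega)]
  push_cast
  ring

def clearedTheta (x : K) (G : ℕ → K) (d : ℕ) : K := x ^ 2 * thetaDenom x d * G d

lemma clearedTheta_zero {x : K} (hx : x ≠ 0) {G : ℕ → K} (h0 : G 0 = -x ^ (-2 : ℤ)) :
    clearedTheta x G 0 = -1 := by
  simp [clearedTheta, thetaDenom, h0, hx]

lemma clearedTheta_one [CharZero K] {x : K} {G : ℕ → K} (h0 : clearedTheta x G 0 = -1)
    (h1 : (1 : K) ^ 2 * (1 - ((1 : K) - 1 / 2) ^ 2 * x ^ 2) * G 1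
      = (1 - (2 * (1 : K) ^ 2 - 3 * 1 + 3 / 2) * x ^ 2) * G 0) :
    clearedTheta x G 1 = 2 * x ^ 2 - 4 := by
  norm_num [clearedTheta, thetaDenom] at h0 ⊢
  linear_combination 4 * x ^ 2 * h1 + (4 - 2 * x ^ 2) * h0

lemma clearedTheta_recurrence [CharZero K] (x : K) (G : ℕ → K) (n : ℕ)
    (h : ((n + 2 : ℕ) : K) ^ 2 * (1 - ((n + 2 : ℕ) - 1 / 2) ^ 2 * x ^ 2) * G (n + 2)
      = (1 - (2 * ((n + 2 : ℕ) : K) ^ 2 - 3 * ((n + 2 : ℕ) : K) + 3 / 2) * x ^ 2) * G (n + 1)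
        + x ^ 2 * G n) :
    ((n : K) + 2) ^ 2 * clearedTheta x G (n + 2)
      = (4 - (8 * ((n : K) + 2) ^ 2 - 12 * ((n : K) + 2) + 6) * x ^ 2) * clearedTheta x G (n + 1)
        + 4 * x ^ 2 * (4 - (2 * (n : K) + 1) ^ 2 * x ^ 2) * clearedTheta x G n := by
  simp only [clearedTheta, thetaDenom_succ]
  push_cast at h ⊢
  linear_combination 4 * x ^ 2 * thetaDenom x n * (4 - (2 * (n : K) + 1) ^ 2 * x ^ 2) * h

end

/-- in `ℚ(h)` (with `h = RatFunc.X`), define `G_d` for `d ≥ −1`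
by `G_{−1} = 0`, `G₀ = −h^{−2}` and the recursion
`d²(1 − (d − 1/2)²h²)·G_d = (1 − (2d² − 3d + 3/2)h²)·G_{d−1} + h²·G_{d−2}`.
Then for every `d ≥ 0` the rational function
`h²·∏_{m=1}^{d}(4 − (2m−1)²h²)·G_d` is a polynomial in `h`. -/
theorem theta_one_point_pole_structure (G : ℕ → RatFunc ℚ)
    (h0 : G 0 = -(RatFunc.X : RatFunc ℚ) ^ (-2 : ℤ))
    (h1 : (1 : RatFunc ℚ) ^ 2 * (1 - ((1 : RatFunc ℚ) - 1 / 2) ^ 2 * RatFunc.X ^ 2) * G 1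
      = (1 - (2 * (1 : RatFunc ℚ) ^ 2 - 3 * 1 + 3 / 2) * RatFunc.X ^ 2) * G 0)
    (hrec : ∀ d : ℕ, 2 ≤ d →
      ((d : RatFunc ℚ)) ^ 2 * (1 - ((d : RatFunc ℚ) - 1 / 2) ^ 2 * RatFunc.X ^ 2) * G d
        = (1 - (2 * (d : RatFunc ℚ) ^ 2 - 3 * (d : RatFunc ℚ) + 3 / 2) * RatFunc.X ^ 2)
            * G (d - 1)
          + RatFunc.X ^ 2 * G (d - 2)) :
    ∀ d : ℕ, ∃ p : Polynomial ℚ,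
      RatFunc.X ^ 2 *
          (∏ m ∈ Finset.Icc 1 d, (4 - (2 * (m : RatFunc ℚ) - 1) ^ 2 * RatFunc.X ^ 2)) *
          G d
        = algebraMap (Polynomial ℚ) (RatFunc ℚ) p := by
  intro d
  set S := (IsScalarTower.toAlgHom ℚ ℚ[X] (RatFunc ℚ)).range
  have hX : (RatFunc.X : RatFunc ℚ) ∈ S := ⟨Polynomial.X, RatFunc.algebraMap_X⟩
  have hF₀ := clearedTheta_zero RatFunc.X_ne_zero h0
  have hF₁ := clearedTheta_one hF₀ h1
  obtain ⟨p, hp⟩ := S.mem_of_linear_recurrence (c := fun n => ((n : ℚ) + 2) ^ 2)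
    (fun n => by positivity)
    (fun n => by
      rw [map_pow, map_add, map_natCast, map_ofNat]
      exact clearedTheta_recurrence _ G n (hrec (n + 2) (by omega)))
    (fun n => by
      apply_rules [natCast_mem, ofNat_mem, one_mem, hX, pow_mem, sub_mem, add_mem, mul_mem])
    (fun n => by
      apply_rules [natCast_mem, ofNat_mem, one_mem, hX, pow_mem, sub_mem, add_mem, mul_mem])
    (hF₀ ▸ neg_mem (one_mem S))
    (hF₁ ▸ by apply_rules [ofNat_mem, hX, pow_mem, sub_mem, mul_mem]) d
  exact ⟨p, hp.symm⟩
end
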